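/- Let X be a centered real random variable with |X| ≤ c almost surely and σ² = E[X²]. Then log E[e^X] - σ²/2 ≥ -(σ²/2)·ε₁(c), where ε₁(c) = (1 - θ(-c)) + (θ(-c)·c/2)², and θ(x) = 2(e^x - 1 - x)/x² for x ≠ 0, θ(0) = 1. -/

import Mathlib

open MeasureTheory ProbabilityTheory Real

/-- `θ(x) = 2(e^x - 1 - x)/x²` for `x ≠ 0`, `θ(0) = 1`. -/
noncomputable def thetaFn (x : ℝ) : ℝ :=
  if x = 0 then 1 else 2 * (Real.exp x - 1 - x) / x ^ 2

/-!
Since `e^y = 1 + y + θ(y) y² / 2` and `θ` is increasing, `e^X ≥ 1 + X + θ(-c) X² / 2` whenever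
`X ≥ -c`; taking expectations of a centered `X` gives `E[e^X] ≥ 1 + u` with `u = θ(-c) σ² / 2`.
Then `log (1 + u) ≥ u - u² / 2` and `σ² ≤ c²` give the bound.
-/

namespace Real

theorem exp_le_one_add_add_sq_div_two_of_nonpos {x : ℝ} (hx : x ≤ 0) :
    exp x ≤ 1 + x + x ^ 2 / 2 := by
  have hanti : Antitone fun y : ℝ => 1 + y + y ^ 2 / 2 - exp y := by
    refine antitone_of_hasDerivAt_nonpos (f' := fun y => 1 + y - exp y) (fun y => ?_) fun y => ?_
    · exact ((((hasDerivAt_id' y).const_add 1).add ((hasDerivAt_pow 2 y).div_const 2)).sub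
        (hasDerivAt_exp y)).congr_deriv (by simp)
    · simpa [add_comm] using add_one_le_exp y
  simpa using hanti hx

theorem monotone_exp_mul_sub_two_add_add_two :
    Monotone fun x : ℝ => exp x * (x - 2) + x + 2 := by
  refine monotone_of_hasDerivAt_nonneg (f' := fun x => exp x * (x - 1) + 1) (fun x => ?_)
    fun x => ?_
  · exact ((((hasDerivAt_exp x).mul ((hasDerivAt_id' x).sub_const 2)).add
      (hasDerivAt_id' x)).add_const 2).congr_deriv (by ring)
  · have h : exp x * (1 - x) ≤ 1 := by
      simpa [← exp_add] using mul_le_mul_of_nonneg_left (one_sub_le_exp_neg x) (exp_pos x).le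
    simp only [Pi.zero_apply]
    linarith

end Real

theorem thetaFn_of_ne_zero {x : ℝ} (hx : x ≠ 0) : thetaFn x = 2 * (exp x - 1 - x) / x ^ 2 :=
  if_neg hx

theorem exp_eq_one_add_add_thetaFn_mul_sq_div_two (x : ℝ) :
    exp x = 1 + x + thetaFn x * x ^ 2 / 2 := by
  rcases eq_or_ne x 0 with rfl | hx
  · simp
  · rw [thetaFn_of_ne_zero hx]
    field_simp
    ring

theorem thetaFn_nonneg (x : ℝ) : 0 ≤ thetaFn x := by
  rcases eq_or_ne x 0 with rfl | hx
  · simp [thetaFn]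
  · rw [thetaFn_of_ne_zero hx]
    have := add_one_le_exp x
    exact div_nonneg (by linarith) (sq_nonneg x)

theorem thetaFn_le_one {x : ℝ} (hx : x ≤ 0) : thetaFn x ≤ 1 := by
  rcases eq_or_ne x 0 with rfl | hx0
  · simp [thetaFn]
  · rw [thetaFn_of_ne_zero hx0, div_le_one (by positivity)]
    linarith [exp_le_one_add_add_sq_div_two_of_nonpos hx]

theorem one_le_thetaFn {x : ℝ} (hx : 0 ≤ x) : 1 ≤ thetaFn x := by
  rcases eq_or_ne x 0 with rfl | hx0
  · simp [thetaFn]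
  · rw [thetaFn_of_ne_zero hx0, le_div_iff₀ (by positivity)]
    linarith [quadratic_le_exp_of_nonneg hx]

theorem hasDerivAt_thetaFn {x : ℝ} (hx : x ≠ 0) :
    HasDerivAt thetaFn (2 * (exp x * (x - 2) + x + 2) / x ^ 3) x := by
  have hnum : HasDerivAt (fun y => 2 * (exp y - 1 - y)) (2 * (exp x - 1)) x := by
    simpa using (((hasDerivAt_exp x).sub_const 1).sub (hasDerivAt_id x)).const_mul 2
  have hquot := hnum.div (hasDerivAt_pow 2 x) (pow_ne_zero 2 hx)
  refine (hquot.congr_deriv ?_).congr_of_eventuallyEq ?_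
  · field_simp
    ring
  · filter_upwards [eventually_ne_nhds hx] with y hy
    exact thetaFn_of_ne_zero hy

theorem thetaFn_deriv_nonneg {x : ℝ} (hx : x ≠ 0) :
    0 ≤ 2 * (exp x * (x - 2) + x + 2) / x ^ 3 := by
  -- `e^x (x - 2) + x + 2` is monotone and vanishes at `0`, so it has the sign of `x³`.
  have hmono := monotone_exp_mul_sub_two_add_add_two
  rcases hx.lt_or_gt with hneg | hpos
  · have h := hmono hneg.le
    simp only [exp_zero, zero_sub] at h
    exact div_nonneg_of_nonpos (by linarith) (Odd.pow_nonpos (by decide) hneg.le)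
  · have h := hmono hpos.le
    simp only [exp_zero, zero_sub] at h
    exact div_nonneg (by linarith) (by positivity)

theorem monotoneOn_thetaFn {D : Set ℝ} (hD : Convex ℝ D) (hD0 : (0 : ℝ) ∉ D) :
    MonotoneOn thetaFn D :=
  monotoneOn_of_hasDerivWithinAt_nonneg hD
    (fun _ hx =>
      (hasDerivAt_thetaFn (ne_of_mem_of_not_mem hx hD0)).continuousAt.continuousWithinAt)
    (fun _ hx => (hasDerivAt_thetaFn
      (ne_of_mem_of_not_mem (interior_subset hx) hD0)).hasDerivWithinAt)
    fun _ hx => thetaFn_deriv_nonneg (ne_of_mem_of_not_mem (interior_subset hx) hD0)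

theorem monotone_thetaFn : Monotone thetaFn := by
  intro x y hxy
  rcases lt_or_ge 0 x with hx | hx
  · exact monotoneOn_thetaFn (convex_Ioi 0) (by simp) hx (hx.trans_le hxy) hxy
  rcases lt_or_ge y 0 with hy | hy
  · exact monotoneOn_thetaFn (convex_Iio 0) (by simp) (hxy.trans_lt hy) hy hxy
  exact (thetaFn_le_one hx).trans (one_le_thetaFn hy)

theorem one_add_add_thetaFn_mul_sq_div_two_le_exp {a y : ℝ} (hay : a ≤ y) :
    1 + y + thetaFn a * y ^ 2 / 2 ≤ exp y := by
  rw [exp_eq_one_add_add_thetaFn_mul_sq_div_two y]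
  gcongr
  exact monotone_thetaFn hay

theorem sub_sq_div_two_le_log_one_add {u : ℝ} (hu : 0 ≤ u) : u - u ^ 2 / 2 ≤ log (1 + u) := by
  refine le_trans ?_ (le_log_one_add_of_nonneg hu)
  rw [le_div_iff₀ (by linarith)]
  nlinarith [pow_nonneg hu 3]

section Probability

variable {Ω : Type*} [MeasurableSpace Ω] {μ : Measure Ω} [IsProbabilityMeasure μ] {X : Ω → ℝ}

theorem one_add_thetaFn_mul_integral_sq_div_two_le_integral_exp {c : ℝ}
    (hX : Integrable X μ) (hX2 : Integrable (fun ω => X ω ^ 2) μ)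
    (hexpX : Integrable (fun ω => exp (X ω)) μ) (hlower : ∀ᵐ ω ∂μ, -c ≤ X ω)
    (hcentered : ∫ ω, X ω ∂μ = 0) :
    1 + thetaFn (-c) * (∫ ω, X ω ^ 2 ∂μ) / 2 ≤ ∫ ω, exp (X ω) ∂μ := by
  have hlin : Integrable (fun ω => 1 + X ω) μ := (integrable_const 1).add hX
  have hsq : Integrable (fun ω => thetaFn (-c) * X ω ^ 2 / 2) μ := (hX2.const_mul _).div_const 2
  calc 1 + thetaFn (-c) * (∫ ω, X ω ^ 2 ∂μ) / 2
      = ∫ ω, (1 + X ω + thetaFn (-c) * X ω ^ 2 / 2) ∂μ := by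
        rw [integral_add hlin hsq, integral_add (integrable_const 1) hX, integral_div,
          integral_const_mul, hcentered]
        simp
    _ ≤ ∫ ω, exp (X ω) ∂μ :=
        integral_mono_ae (hlin.add hsq) hexpX
          (hlower.mono fun ω hω => one_add_add_thetaFn_mul_sq_div_two_le_exp hω)

end Probability

theorem bounded_centered_log_mgf_lower {Ω : Type*} [MeasureSpace Ω]
    [IsProbabilityMeasure (ℙ : Measure Ω)]
    (X : Ω → ℝ) (hXmeas : Measurable X)
    (c : ℝ) (hbound : ∀ᵐ ω ∂ℙ, |X ω| ≤ c)
    (hcentered : ∫ ω, X ω ∂ℙ = 0) :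
    -((∫ ω, X ω ^ 2 ∂ℙ) / 2) * ((1 - thetaFn (-c)) + (thetaFn (-c) * c / 2) ^ 2) ≤
      Real.log (∫ ω, Real.exp (X ω) ∂ℙ) - (∫ ω, X ω ^ 2 ∂ℙ) / 2 := by
  have hX : Integrable X ℙ :=
    .of_bound hXmeas.aestronglyMeasurable c (by simpa using hbound)
  have hsq_le : ∀ᵐ ω ∂ℙ, X ω ^ 2 ≤ c ^ 2 :=
    hbound.mono fun ω hω => sq_le_sq' (neg_le_of_abs_le hω) (le_of_abs_le hω)
  have hX2 : Integrable (fun ω => X ω ^ 2) ℙ :=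
    .of_bound (hXmeas.pow_const 2).aestronglyMeasurable (c ^ 2)
      (hsq_le.mono fun ω hω => by simpa using hω)
  have hexpX : Integrable (fun ω => exp (X ω)) ℙ :=
    .of_bound hXmeas.exp.aestronglyMeasurable (exp c)
      (hbound.mono fun ω hω => by simpa using le_of_abs_le hω)
  set σ2 := ∫ ω, X ω ^ 2 ∂ℙ
  set θ := thetaFn (-c)
  have hσ2 : 0 ≤ σ2 := integral_nonneg fun ω => sq_nonneg _
  have hσ2_le : σ2 ≤ c ^ 2 := by
    simpa using integral_mono_ae hX2 (integrable_const _) hsq_le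
  have hmgf : 1 + θ * σ2 / 2 ≤ ∫ ω, exp (X ω) ∂ℙ :=
    one_add_thetaFn_mul_integral_sq_div_two_le_integral_exp hX hX2 hexpX
      (hbound.mono fun ω hω => neg_le_of_abs_le hω) hcentered
  have hu : 0 ≤ θ * σ2 / 2 := by have := thetaFn_nonneg (-c); positivity
  have hlog : θ * σ2 / 2 - (θ * σ2 / 2) ^ 2 / 2 ≤ log (∫ ω, exp (X ω) ∂ℙ) :=
    (sub_sq_div_two_le_log_one_add hu).trans (log_le_log (by linarith) hmgf)
  nlinarith [mul_le_mul_of_nonneg_left hσ2_le (mul_nonneg (sq_nonneg θ) hσ2)]
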